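/- arXiv:2009.04405 — 3 statements merged into one kernel-verified Lean document; each statement's English description precedes it below -/
import Mathlib

section
/- Let A, B ∈ ℝ^{n×n} and J a nonempty proper subset of {1,…,n}. Define I_J = diag(d) with d_i = 1 for i ∈ J and d_i = −1 for i ∉ J, and I_{P_J} = I_c + I_J Δ I_J, where I_c = (A+B)/2 and Δ = (I_u − I_l)/2. Then every matrix in I(A,B) is an almost P-matrix of the first category with respect to J if and only if I_{P_J} and I_z (for all z ∈ {±1}^n) are almost P-matrices of the first category with respect to J. -/
open Matrix Finset

def IsPMatrix {n : ℕ} (A : Matrix (Fin n) (Fin n) ℝ) : Prop :=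
  ∀ s : Finset (Fin n),
    0 < (A.submatrix (fun i : s => (i : Fin n)) (fun j : s => (j : Fin n))).det

def IsNMatrix {n : ℕ} (A : Matrix (Fin n) (Fin n) ℝ) : Prop :=
  ∀ s : Finset (Fin n), s.Nonempty →
    (A.submatrix (fun i : s => (i : Fin n)) (fun j : s => (j : Fin n))).det < 0

def IsAlmostPMatrix {n : ℕ} (A : Matrix (Fin n) (Fin n) ℝ) : Prop :=
  (∀ s : Finset (Fin n), s.Nonempty → s ≠ Finset.univ →
    0 < (A.submatrix (fun i : s => (i : Fin n)) (fun j : s => (j : Fin n))).det) ∧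
  A.det < 0

def IntervalHull {m n : ℕ} (A B : Matrix (Fin m) (Fin n) ℝ) :
    Set (Matrix (Fin m) (Fin n) ℝ) :=
  {C | ∀ i j, ∃ t : ℝ, t ∈ Set.Icc (0:ℝ) 1 ∧ C i j = t * A i j + (1 - t) * B i j}

noncomputable def Iu {m n : ℕ} (A B : Matrix (Fin m) (Fin n) ℝ) : Matrix (Fin m) (Fin n) ℝ :=
  fun i j => max (A i j) (B i j)

noncomputable def Il {m n : ℕ} (A B : Matrix (Fin m) (Fin n) ℝ) : Matrix (Fin m) (Fin n) ℝ :=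
  fun i j => min (A i j) (B i j)

noncomputable def Ic {m n : ℕ} (A B : Matrix (Fin m) (Fin n) ℝ) : Matrix (Fin m) (Fin n) ℝ :=
  fun i j => (A i j + B i j) / 2

noncomputable def Dlt {m n : ℕ} (A B : Matrix (Fin m) (Fin n) ℝ) : Matrix (Fin m) (Fin n) ℝ :=
  fun i j => (Iu A B i j - Il A B i j) / 2

noncomputable def Iz {n : ℕ} (A B : Matrix (Fin n) (Fin n) ℝ) (z : Fin n → ℝ) :
    Matrix (Fin n) (Fin n) ℝ :=
  Ic A B - Matrix.diagonal z * Dlt A B * Matrix.diagonal z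

def SignVec {n : ℕ} (z : Fin n → ℝ) : Prop := ∀ i, z i = 1 ∨ z i = -1

def BlockPattern {n : ℕ} (A : Matrix (Fin n) (Fin n) ℝ) (J : Finset (Fin n)) : Prop :=
  (∀ i ∈ J, ∀ j ∈ J, A i j < 0) ∧ (∀ i ∉ J, ∀ j ∉ J, A i j < 0) ∧
  (∀ i ∈ J, ∀ j ∉ J, 0 < A i j) ∧ (∀ i ∉ J, ∀ j ∈ J, 0 < A i j)

def IsNMatrixSecond {n : ℕ} (A : Matrix (Fin n) (Fin n) ℝ) : Prop :=
  IsNMatrix A ∧ ∀ i j, A i j ≤ 0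

def IsNMatrixFirst {n : ℕ} (A : Matrix (Fin n) (Fin n) ℝ) (J : Finset (Fin n)) : Prop :=
  IsNMatrix A ∧ BlockPattern A J

def IsAlmostPSecond {n : ℕ} (A : Matrix (Fin n) (Fin n) ℝ) : Prop :=
  IsUnit A.det ∧ IsNMatrix A⁻¹ ∧ ∀ i j, A⁻¹ i j < 0

def IsAlmostPFirst {n : ℕ} (A : Matrix (Fin n) (Fin n) ℝ) (J : Finset (Fin n)) : Prop :=
  IsUnit A.det ∧ IsNMatrixFirst A⁻¹ J

def InJ {n : ℕ} (J : Finset (Fin n)) (x : Fin n → ℝ) : Prop :=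
  (∀ j ∈ J, 0 < x j) ∧ (∀ j ∉ J, x j < 0)

def Semipos {p q : Type*} [Fintype q] (M : Matrix p q ℝ) : Prop :=
  ∃ x : q → ℝ, (∀ j, 0 ≤ x j) ∧ ∀ i, 0 < M.mulVec x i

def MinSemipos {m n : ℕ} (M : Matrix (Fin m) (Fin n) ℝ) : Prop :=
  Semipos M ∧
  ∀ j₀ : Fin n, ¬ Semipos (M.submatrix id (fun j : {j : Fin n // j ≠ j₀} => (j : Fin n)))

/-!
Conjugating by `I_J = diag d` and negating, "`C` is almost P of the first category" says that
`-(I_J C⁻¹ I_J)` is entrywise positive and that `C⁻¹` is an N-matrix. Every `C` in the hull lies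
entrywise between `-(I_J I_{P_J} I_J)` and `-(I_J I_d I_J)` after this conjugation (`I_d` is `I_z`
at `z = d`), so Kuttler's theorem gives the invertibility of `C` and the sign pattern of `C⁻¹`. By Jacobi's complementary
minor formula, `C⁻¹` is an N-matrix iff the proper principal minors of `C` are positive and
`det C < 0`. None of these quantities vanishes on the convex, hence connected, hull: `det C` by the
above, and a kernel vector `x` of a proper principal submatrix `C[s]` would be a vector whose sign
the P-matrix `I_z[s]`, `z = sign x`, reverses. Hence their signs are those at the vertex `I_d`.
-/

section PrincipalMinor

variable {ι R : Type*} [DecidableEq ι] [CommRing R]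

def principalMinor (M : Matrix ι ι R) (s : Finset ι) : R :=
  (M.submatrix ((↑) : s → ι) (↑)).det

@[simp]
lemma principalMinor_empty (M : Matrix ι ι R) : principalMinor M ∅ = 1 :=
  det_isEmpty

lemma principalMinor_univ [Fintype ι] (M : Matrix ι ι R) : principalMinor M univ = M.det :=
  det_submatrix_equiv_self (Equiv.subtypeUnivEquiv mem_univ) M

lemma det_submatrix_embedding {κ : Type*} [Fintype κ] [DecidableEq κ] (M : Matrix ι ι R)
    (f : κ ↪ ι) : (M.submatrix f f).det = principalMinor M (univ.map f) := by
  let e : κ ≃ (Finset.map f univ : Finset ι) :=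
    Equiv.ofBijective (fun k => ⟨f k, mem_map_of_mem f (mem_univ k)⟩)
      ⟨fun a b h => f.injective (congrArg Subtype.val h), fun ⟨x, hx⟩ => by
        obtain ⟨k, -, rfl⟩ := mem_map.mp hx
        exact ⟨k, rfl⟩⟩
  exact det_submatrix_equiv_self e (M.submatrix Subtype.val Subtype.val)

lemma det_submatrix_pos_of_principalMinor_pos [LT R] {M : Matrix ι ι R}
    (hM : ∀ s, 0 < principalMinor M s) {κ : Type*} [Fintype κ] [DecidableEq κ] (f : κ ↪ ι) :
    0 < (M.submatrix f f).det :=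
  det_submatrix_embedding M f ▸ hM _

lemma principalMinor_compl [Fintype ι] (M : Matrix ι ι R) (s : Finset ι) :
    principalMinor M sᶜ = (M.submatrix ((↑) : {x // x ∉ s} → ι) (↑)).det :=
  det_submatrix_equiv_self (Equiv.subtypeEquivRight fun _ => mem_compl : (sᶜ : Finset ι) ≃ _)
    (M.submatrix ((↑) : {x // x ∉ s} → ι) (↑))

/-- Jacobi's complementary minor formula. -/
theorem principalMinor_inv_compl_mul_det [Fintype ι] {C : Matrix ι ι R} (hC : IsUnit C.det)
    (s : Finset ι) : principalMinor C⁻¹ sᶜ * C.det = principalMinor C s := by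
  let e := Equiv.sumCompl (· ∈ s)
  set M := C.submatrix e e
  set M' := C⁻¹.submatrix e e
  have hMM' : M * M' = 1 := by
    rw [submatrix_mul_equiv, mul_nonsing_inv _ hC, submatrix_one_equiv]
  rw [← fromBlocks_toBlocks M, ← fromBlocks_toBlocks M', fromBlocks_multiply,
    ← fromBlocks_one, fromBlocks_inj] at hMM'
  obtain ⟨-, h₁₂, -, h₂₂⟩ := hMM'
  -- replacing the first block column of `M'` by the identity turns `M * M'` block triangular
  have key : M * fromBlocks 1 M'.toBlocks₁₂ 0 M'.toBlocks₂₂ =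
      fromBlocks M.toBlocks₁₁ 0 M.toBlocks₂₁ 1 := by
    conv_lhs => rw [← fromBlocks_toBlocks M]
    rw [fromBlocks_multiply, h₁₂, h₂₂]
    simp
  have hdet := congrArg det key
  rw [det_mul, det_fromBlocks_zero₂₁, det_fromBlocks_zero₁₂, det_one, det_one, one_mul,
    mul_one, det_submatrix_equiv_self] at hdet
  rw [principalMinor_compl, mul_comm]
  exact hdet

end PrincipalMinor

section Laplace

variable {ι R : Type*} [Fintype ι] [DecidableEq ι] [CommRing R]

lemma det_updateRow_single_self (N : Matrix ι ι R) (k : ι) :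
    (N.updateRow k (Pi.single k 1)).det = (N.submatrix ((↑) : {j // j ≠ k} → ι) (↑)).det := by
  let e := Equiv.sumCompl (· ≠ k)
  have : Unique {j // ¬j ≠ k} :=
    ⟨⟨⟨k, not_not.mpr rfl⟩⟩, fun j => Subtype.ext (not_not.mp j.2)⟩
  have hblocks : (N.updateRow k (Pi.single k 1)).submatrix e e =
      fromBlocks (N.submatrix ((↑) : {j // j ≠ k} → ι) (↑)) (of fun i _ => N i k) 0 1 := by
    ext (i | i) (j | j)
    · simp [e, updateRow_ne i.2]
    · simp [e, updateRow_ne i.2, not_not.mp j.2]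
    · simp [e, not_not.mp i.2, j.2]
    · simp [e, not_not.mp j.2, Subsingleton.elim i j]
  rw [← det_submatrix_equiv_self e, hblocks, det_fromBlocks_zero₂₁, det_one, mul_one]

lemma det_add_diagonal_single (N : Matrix ι ι R) (k : ι) (c : R) :
    (N + diagonal (Pi.single k c)).det =
      N.det + c * (N.submatrix ((↑) : {j // j ≠ k} → ι) (↑)).det := by
  have : N + diagonal (Pi.single k c) = N.updateRow k (N k + c • Pi.single k 1) := by
    ext i j
    by_cases hi : i = k
    · subst hi
      by_cases hj : j = i
      · subst hj; simp
      · simp [diagonal_apply_ne _ (Ne.symm hj), hj]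
    · simp [diagonal_apply, hi]
  rw [this, det_updateRow_add, det_updateRow_smul, updateRow_eq_self, det_updateRow_single_self]

end Laplace

section PMatrix

variable {ι 𝕜 : Type*} [DecidableEq ι] [Field 𝕜] [LinearOrder 𝕜] [IsStrictOrderedRing 𝕜]
  {M : Matrix ι ι 𝕜}

lemma principalMinor_add_diagonal_single_pos (hM : ∀ s, 0 < principalMinor M s) {c : 𝕜}
    (hc : 0 ≤ c) (k : ι) (s : Finset ι) :
    0 < principalMinor (M + diagonal (Pi.single k c)) s := by
  rw [principalMinor, show ∀ f : s → ι, (M + diagonal (Pi.single k c)).submatrix f f =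
    M.submatrix f f + (diagonal (Pi.single k c)).submatrix f f from fun _ => rfl,
    submatrix_diagonal _ _ Subtype.val_injective]
  by_cases hk : k ∈ s
  · have : Pi.single k c ∘ ((↑) : s → ι) = Pi.single ⟨k, hk⟩ c := by
      funext j; simp [Pi.single_apply, Subtype.ext_iff]
    rw [this, det_add_diagonal_single, submatrix_submatrix]
    exact add_pos_of_pos_of_nonneg (hM s) <| mul_nonneg hc
      (det_submatrix_pos_of_principalMinor_pos hM
        ((Function.Embedding.subtype _).trans (Function.Embedding.subtype _))).le
  · have : Pi.single k c ∘ ((↑) : s → ι) = 0 := by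
      funext j; simp [ne_of_mem_of_not_mem j.2 hk]
    rw [this, show diagonal (0 : s → 𝕜) = 0 from diagonal_zero, add_zero]
    exact hM s

lemma principalMinor_add_diagonal_pos [Fintype ι] (hM : ∀ s, 0 < principalMinor M s)
    {t : ι → 𝕜} (ht : ∀ i, 0 ≤ t i) (s : Finset ι) :
    0 < principalMinor (M + diagonal t) s := by
  have partial_sums : ∀ F : Finset ι, ∀ s,
      0 < principalMinor (M + ∑ i ∈ F, diagonal (Pi.single i (t i))) s := by
    intro F
    induction F using Finset.induction_on with
    | empty => simpa using hM
    | insert k F hk ih =>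
      rw [sum_insert hk, ← add_assoc, add_right_comm]
      exact principalMinor_add_diagonal_single_pos ih (ht k) k
  have hsum : ∑ i, diagonal (Pi.single i (t i)) = diagonal t := by
    simp_rw [Matrix.diagonal_single]
    exact Matrix.sum_single_eq_diagonal t
  exact hsum ▸ partial_sums univ s

theorem exists_pos_mul_mulVec_of_principalMinor_pos [Fintype ι]
    (hM : ∀ s, 0 < principalMinor M s) {x : ι → 𝕜} (hx : x ≠ 0) :
    ∃ i, 0 < x i * (M *ᵥ x) i := by
  by_contra! h
  -- on the support `T` of `x`, the diagonal shift `t` makes `x` a kernel vector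
  let t : ι → 𝕜 := fun i => -(x i * (M *ᵥ x) i) / x i ^ 2
  let T := univ.filter (x · ≠ 0)
  have hker : (M + diagonal t).submatrix ((↑) : T → ι) ((↑) : T → ι) *ᵥ (fun i => x i) = 0 := by
    funext i
    have hxi : x i ≠ 0 := (mem_filter.mp i.2).2
    have hsupp : ((M + diagonal t).submatrix ((↑) : T → ι) ((↑) : T → ι) *ᵥ fun i => x i) i =
        ((M + diagonal t) *ᵥ x) i := by
      simp only [mulVec, dotProduct, submatrix_apply]
      rw [sum_coe_sort T (fun j => (M + diagonal t) i j * x j), sum_filter_of_ne]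
      intro j _ hj
      exact right_ne_zero_of_mul hj
    rw [hsupp, add_mulVec, Pi.add_apply, mulVec_diagonal, Pi.zero_apply]
    simp only [t]
    field_simp
    ring
  have hne : (fun i : T => x i) ≠ 0 := by
    obtain ⟨k, hk⟩ := Function.ne_iff.mp hx
    exact fun h => hk (congrFun h ⟨k, mem_filter.mpr ⟨mem_univ _, hk⟩⟩)
  have ht : ∀ i, 0 ≤ t i := fun i => div_nonneg (neg_nonneg.mpr (h i)) (sq_nonneg _)
  exact (principalMinor_add_diagonal_pos hM ht T).ne'
    (exists_mulVec_eq_zero_iff.mp ⟨_, hne, hker⟩)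

end PMatrix

section Monotone

variable {ι 𝕜 : Type*} [Fintype ι] [Field 𝕜] [LinearOrder 𝕜] [IsStrictOrderedRing 𝕜]

lemma mulVec_apply_nonneg {κ : Type*} {M : Matrix κ ι 𝕜} (hM : ∀ i j, 0 ≤ M i j) {v : ι → 𝕜}
    (hv : ∀ i, 0 ≤ v i) (i : κ) : 0 ≤ (M *ᵥ v) i :=
  sum_nonneg fun j _ => mul_nonneg (hM i j) (hv j)

lemma mul_apply_nonneg {κ μ : Type*} {M : Matrix κ ι 𝕜} {N : Matrix ι μ 𝕜}
    (hM : ∀ i j, 0 ≤ M i j) (hN : ∀ i j, 0 ≤ N i j) (i : κ) (j : μ) : 0 ≤ (M * N) i j :=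
  sum_nonneg fun k _ => mul_nonneg (hM i k) (hN k j)

lemma mulVec_one_pos [DecidableEq ι] {M : Matrix ι ι 𝕜} (hM : ∀ i j, 0 ≤ M i j)
    (hdet : IsUnit M.det) (i : ι) : 0 < (M *ᵥ 1) i := by
  refine (mulVec_apply_nonneg hM (fun _ => zero_le_one) i).lt_of_ne fun h => ?_
  have hrow : ∀ j, M i j = 0 := fun j => by
    simpa using (sum_eq_zero_iff_of_nonneg fun k _ => mul_nonneg (hM i k) zero_le_one).mp
      h.symm j (mem_univ j)
  have := congrFun (congrFun (mul_nonsing_inv M hdet) i) i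
  simp [mul_apply, hrow] at this

/-- `M` is monotone in the sense of Collatz. -/
def IsMonotoneMatrix (M : Matrix ι ι 𝕜) : Prop :=
  ∀ v : ι → 𝕜, (∀ i, 0 ≤ (M *ᵥ v) i) → ∀ i, 0 ≤ v i

namespace IsMonotoneMatrix

variable [DecidableEq ι] {M : Matrix ι ι 𝕜}

lemma isUnit_det (hM : IsMonotoneMatrix M) : IsUnit M.det := by
  rw [isUnit_iff_ne_zero]
  intro h
  obtain ⟨v, hv, hMv⟩ := exists_mulVec_eq_zero_iff.mpr h
  refine hv (funext fun i => le_antisymm ?_ (hM v (by simp [hMv]) i))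
  simpa using hM (-v) (by simp [mulVec_neg, hMv]) i

lemma inv_nonneg (hM : IsMonotoneMatrix M) (i j : ι) : 0 ≤ M⁻¹ i j := by
  have h := hM (M⁻¹ *ᵥ Pi.single j 1) (fun k => by
    rw [mulVec_mulVec, mul_nonsing_inv _ hM.isUnit_det, one_mulVec, Pi.single_apply]
    split_ifs <;> norm_num) i
  simpa using h

end IsMonotoneMatrix

lemma isMonotoneMatrix_one_sub [DecidableEq ι] {G : Matrix ι ι 𝕜} (hG : ∀ i j, 0 ≤ G i j)
    {x : ι → 𝕜} (hx : ∀ i, 0 < x i) (hGx : ∀ i, (G *ᵥ x) i < x i) :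
    IsMonotoneMatrix (1 - G) := by
  intro v hv
  by_contra! hneg
  obtain ⟨k, hk⟩ := hneg
  have : Nonempty ι := ⟨k⟩
  -- compare `v` with the multiple `c • x` that touches it at the index of the least ratio
  obtain ⟨i, hi⟩ := Finite.exists_min fun j => v j / x j
  set c := v i / x i
  have hc : c < 0 := (hi k).trans_lt (div_neg_of_neg_of_pos hk (hx k))
  have hcv : ∀ j, c * x j ≤ v j := fun j => (le_div_iff₀ (hx j)).mp (hi j)
  have hGv : c * (G *ᵥ x) i ≤ (G *ᵥ v) i := by
    simp only [mulVec, dotProduct, mul_sum]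
    exact sum_le_sum fun j _ => by nlinarith [hG i j, hcv j]
  have hvi : c * x i = v i := div_mul_cancel₀ _ (hx i).ne'
  have := hv i
  rw [sub_mulVec, one_mulVec, Pi.sub_apply] at this
  nlinarith [mul_lt_mul_of_neg_left (hGx i) hc]

lemma isMonotoneMatrix_of_le_of_le [DecidableEq ι] {L C U : Matrix ι ι 𝕜}
    (hLC : ∀ i j, L i j ≤ C i j) (hCU : ∀ i j, C i j ≤ U i j) (hL : IsUnit L.det)
    (hU : IsUnit U.det) (hLinv : ∀ i j, 0 ≤ L⁻¹ i j) (hUinv : ∀ i j, 0 ≤ U⁻¹ i j) :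
    IsMonotoneMatrix C := by
  obtain ⟨x, hx, hLx⟩ : ∃ x : ι → 𝕜, (∀ i, 0 < x i) ∧ L *ᵥ x = 1 :=
    ⟨L⁻¹ *ᵥ 1, mulVec_one_pos hLinv (isUnit_nonsing_inv_det L hL),
      by rw [mulVec_mulVec, mul_nonsing_inv _ hL, one_mulVec]⟩
  have hCx : ∀ i, 0 ≤ (C *ᵥ x - 1) i := by
    rw [← hLx, ← sub_mulVec]
    exact mulVec_apply_nonneg (fun i j => sub_nonneg.mpr (hLC i j)) fun j => (hx j).le
  obtain ⟨G, hG, hGC⟩ : ∃ G : Matrix ι ι 𝕜, (∀ i j, 0 ≤ G i j) ∧ 1 - G = U⁻¹ * C :=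
    ⟨U⁻¹ * (U - C), mul_apply_nonneg hUinv fun i j => sub_nonneg.mpr (hCU i j),
      by rw [mul_sub, nonsing_inv_mul _ hU, sub_sub_cancel]⟩
  intro v hv
  refine isMonotoneMatrix_one_sub hG hx (fun i => ?_) v fun i => ?_
  · have h1 := mulVec_apply_nonneg hUinv hCx i
    have h2 := mulVec_one_pos hUinv (isUnit_nonsing_inv_det U hU) i
    have h3 : (1 - G) *ᵥ x = U⁻¹ *ᵥ C *ᵥ x := by rw [hGC, mulVec_mulVec]
    rw [sub_mulVec, one_mulVec] at h3
    rw [mulVec_sub, ← h3] at h1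
    simp only [Pi.sub_apply] at h1 h2
    linarith
  · rw [hGC, ← mulVec_mulVec]
    exact mulVec_apply_nonneg hUinv hv i

/-- Kuttler's theorem on inverse-nonnegative interval matrices. -/
theorem isUnit_det_and_inv_le_of_le_of_le [DecidableEq ι] {L C U : Matrix ι ι 𝕜}
    (hLC : ∀ i j, L i j ≤ C i j) (hCU : ∀ i j, C i j ≤ U i j) (hL : IsUnit L.det)
    (hU : IsUnit U.det) (hLinv : ∀ i j, 0 ≤ L⁻¹ i j) (hUinv : ∀ i j, 0 ≤ U⁻¹ i j) :
    IsUnit C.det ∧ ∀ i j, U⁻¹ i j ≤ C⁻¹ i j := by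
  have hmono := isMonotoneMatrix_of_le_of_le hLC hCU hL hU hLinv hUinv
  have hCu := hmono.isUnit_det
  have hCU' : ∀ i j, 0 ≤ (U - C) i j := fun i j => sub_nonneg.mpr (hCU i j)
  refine ⟨hCu, fun i j => ?_⟩
  have hdiff : C⁻¹ * (U - C) * U⁻¹ = C⁻¹ - U⁻¹ := by
    rw [mul_sub, sub_mul, nonsing_inv_mul _ hCu, one_mul, mul_assoc, mul_nonsing_inv _ hU,
      mul_one]
  have h := mul_apply_nonneg (mul_apply_nonneg hmono.inv_nonneg hCU') hUinv i j
  rw [hdiff, Matrix.sub_apply, sub_nonneg] at h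
  exact h

end Monotone

section Conjugation

variable {ι R : Type*} [Fintype ι] [DecidableEq ι] [CommRing R] {D : Matrix ι ι R}

lemma neg_conj_neg_conj (hD : D * D = 1) (M : Matrix ι ι R) :
    -(D * -(D * M * D) * D) = M := by
  simp only [mul_neg, neg_mul, neg_neg, ← mul_assoc, hD, one_mul]
  rw [mul_assoc, hD, mul_one]

lemma isUnit_det_and_inv_neg_conj (hD : D * D = 1) {M : Matrix ι ι R} (hM : IsUnit M.det) :
    IsUnit (-(D * M * D)).det ∧ (-(D * M * D))⁻¹ = -(D * M⁻¹ * D) := by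
  have h : -(D * M * D) * -(D * M⁻¹ * D) = 1 := by
    rw [neg_mul_neg]
    calc D * M * D * (D * M⁻¹ * D) = D * M * (D * D) * M⁻¹ * D := by simp only [mul_assoc]
      _ = 1 := by rw [hD, mul_one, mul_assoc D M, mul_nonsing_inv _ hM, mul_one, hD]
  exact ⟨isUnit_det_of_right_inverse h, inv_eq_right_inv h⟩

end Conjugation

lemma pos_of_isPreconnected_of_ne_zero {X : Type*} [TopologicalSpace X] {S : Set X}
    (hS : IsPreconnected S) {f : X → ℝ} (hf : ContinuousOn f S) (hne : ∀ x ∈ S, f x ≠ 0)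
    {a b : X} (ha : a ∈ S) (hb : b ∈ S) (hfa : 0 < f a) : 0 < f b := by
  by_contra! hfb
  obtain ⟨c, hc, hfc⟩ := hS.intermediate_value₂ hb ha hf continuousOn_const hfb hfa.le
  exact hne c hc hfc

lemma continuous_principalMinor {ι R : Type*} [DecidableEq ι] [CommRing R] [TopologicalSpace R]
    [IsTopologicalRing R] (s : Finset ι) : Continuous fun M : Matrix ι ι R => principalMinor M s :=
  (continuous_id.matrix_submatrix _ _).matrix_det

section IntervalHull

variable {m n : ℕ} {A B C : Matrix (Fin m) (Fin n) ℝ}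

lemma mem_intervalHull_iff_mem_uIcc :
    C ∈ IntervalHull A B ↔ ∀ i j, C i j ∈ Set.uIcc (A i j) (B i j) := by
  refine forall₂_congr fun i j => ?_
  rw [Set.uIcc_comm, ← segment_eq_uIcc, segment_eq_image]
  simp only [Set.mem_image, smul_eq_mul]
  exact exists_congr fun t => and_congr_right fun _ => by constructor <;> intro h <;> linarith

lemma convex_intervalHull : Convex ℝ (IntervalHull A B) := by
  intro C hC C' hC' a b ha hb hab
  rw [mem_intervalHull_iff_mem_uIcc] at *
  exact fun i j => convex_uIcc _ _ (hC i j) (hC' i j) ha hb hab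

lemma Dlt_nonneg (i : Fin m) (j : Fin n) : 0 ≤ Dlt A B i j :=
  div_nonneg (sub_nonneg.mpr min_le_max) zero_le_two

lemma mem_intervalHull_iff_abs_sub_le :
    C ∈ IntervalHull A B ↔ ∀ i j, |C i j - Ic A B i j| ≤ Dlt A B i j := by
  rw [mem_intervalHull_iff_mem_uIcc]
  refine forall₂_congr fun i j => ?_
  have := min_add_max (A i j) (B i j)
  rw [Set.uIcc, Set.mem_Icc, abs_le]
  simp only [Ic, Dlt, Iu, Il]
  constructor <;> rintro ⟨h1, h2⟩ <;> constructor <;> linarith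

end IntervalHull

section Vertices

variable {n : ℕ} {A B C : Matrix (Fin n) (Fin n) ℝ}

lemma abs_mul_mul_of_signVec {z : Fin n → ℝ} (hz : SignVec z) (i j : Fin n) (x : ℝ) :
    |z i * x * z j| = |x| := by
  rcases hz i with h | h <;> rcases hz j with h' | h' <;> simp [h, h']

lemma Iz_apply (z : Fin n → ℝ) (i j : Fin n) :
    Iz A B z i j = Ic A B i j - z i * Dlt A B i j * z j := by
  simp [Iz, mul_diagonal, diagonal_mul]

lemma Iz_mem_intervalHull {z : Fin n → ℝ} (hz : SignVec z) : Iz A B z ∈ IntervalHull A B := by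
  refine mem_intervalHull_iff_abs_sub_le.mpr fun i j => le_of_eq ?_
  rw [Iz_apply, sub_sub_cancel_left, abs_neg, abs_mul_mul_of_signVec hz,
    abs_of_nonneg (Dlt_nonneg i j)]

lemma Ic_add_mem_intervalHull {z : Fin n → ℝ} (hz : SignVec z) :
    Ic A B + diagonal z * Dlt A B * diagonal z ∈ IntervalHull A B := by
  refine mem_intervalHull_iff_abs_sub_le.mpr fun i j => le_of_eq ?_
  rw [Matrix.add_apply, mul_diagonal, diagonal_mul, add_sub_cancel_left, abs_mul_mul_of_signVec hz,
    abs_of_nonneg (Dlt_nonneg i j)]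

lemma mul_Iz_mul_le (hC : C ∈ IntervalHull A B) {z : Fin n → ℝ} {i j : Fin n} {u v : ℝ}
    (hu : z i * u = |u|) (hv : z j * v = |v|) : u * Iz A B z i j * v ≤ u * C i j * v := by
  have h : |(C i j - Ic A B i j) * (u * v)| ≤ Dlt A B i j * (|u| * |v|) := by
    rw [abs_mul, abs_mul]
    exact mul_le_mul_of_nonneg_right (mem_intervalHull_iff_abs_sub_le.mp hC i j) (by positivity)
  calc u * Iz A B z i j * v = u * Ic A B i j * v - Dlt A B i j * (|u| * |v|) := by
        rw [Iz_apply, ← hu, ← hv]; ring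
    _ ≤ u * Ic A B i j * v + (C i j - Ic A B i j) * (u * v) := by
        linarith [neg_abs_le ((C i j - Ic A B i j) * (u * v))]
    _ = u * C i j * v := by ring

lemma neg_conj_mem_Icc_of_mem_intervalHull {d : Fin n → ℝ} (hd : SignVec d)
    (hC : C ∈ IntervalHull A B) (i j : Fin n) :
    (-(diagonal d * (Ic A B + diagonal d * Dlt A B * diagonal d) * diagonal d)) i j ≤
        (-(diagonal d * C * diagonal d)) i j ∧
      (-(diagonal d * C * diagonal d)) i j ≤ (-(diagonal d * Iz A B d * diagonal d)) i j := by
  have h := abs_le.mp (mem_intervalHull_iff_abs_sub_le.mp hC i j)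
  simp only [Matrix.neg_apply, mul_diagonal, diagonal_mul, Matrix.add_apply, Iz_apply]
  rcases hd i with hi | hi <;> rcases hd j with hj | hj <;> simp only [hi, hj] <;>
    constructor <;> linarith

end Vertices

section AlmostP

variable {n : ℕ} {C : Matrix (Fin n) (Fin n) ℝ}

lemma IsAlmostPMatrix.principalMinor_pos (hC : IsAlmostPMatrix C) {s : Finset (Fin n)}
    (hs : s ≠ univ) : 0 < principalMinor C s := by
  rcases s.eq_empty_or_nonempty with rfl | hne
  · simp
  · exact hC.1 s hne hs

theorem isNMatrix_inv_iff_isAlmostPMatrix [Nonempty (Fin n)] (hC : IsUnit C.det) :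
    IsNMatrix C⁻¹ ↔ IsAlmostPMatrix C := by
  constructor
  · intro hN
    have hdet : C.det < 0 := by
      have h : principalMinor C⁻¹ univ < 0 := hN univ univ_nonempty
      rw [principalMinor_univ] at h
      exact neg_of_mul_pos_right ((det_nonsing_inv_mul_det _ hC).symm ▸ one_pos) h.le
    refine ⟨fun s _ hs => ?_, hdet⟩
    show 0 < principalMinor C s
    rw [← principalMinor_inv_compl_mul_det hC s]
    exact mul_pos_of_neg_of_neg
      (hN sᶜ ((compl_ne_univ_iff_nonempty sᶜ).mp (by rwa [compl_compl]))) hdet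
  · intro hC' s hs
    have h := principalMinor_inv_compl_mul_det hC sᶜ
    rw [compl_compl] at h
    exact neg_of_mul_pos_left
      (h ▸ hC'.principalMinor_pos ((compl_ne_univ_iff_nonempty s).mpr hs)) hC'.2.le

end AlmostP

section SignPattern

variable {n : ℕ}

lemma signVec_ite (J : Finset (Fin n)) : SignVec fun i => if i ∈ J then (1 : ℝ) else -1 :=
  fun i => by by_cases h : i ∈ J <;> simp [h]

lemma diagonal_mul_diagonal_of_signVec {d : Fin n → ℝ} (hd : SignVec d) :
    diagonal d * diagonal d = 1 := by
  rw [diagonal_mul_diagonal, ← diagonal_one]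
  congr 1
  funext i
  rcases hd i with h | h <;> simp [h]

lemma blockPattern_iff (M : Matrix (Fin n) (Fin n) ℝ) (J : Finset (Fin n)) :
    BlockPattern M J ↔ ∀ i j,
      0 < (-(diagonal (fun i => if i ∈ J then (1 : ℝ) else -1) * M *
        diagonal (fun i => if i ∈ J then (1 : ℝ) else -1))) i j := by
  simp only [BlockPattern, Matrix.neg_apply, mul_diagonal, diagonal_mul]
  constructor
  · rintro ⟨h₁, h₂, h₃, h₄⟩ i j
    by_cases hi : i ∈ J <;> by_cases hj : j ∈ J <;> simp only [hi, hj, if_true, if_false]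
    · linarith [h₁ i hi j hj]
    · linarith [h₃ i hi j hj]
    · linarith [h₄ i hi j hj]
    · linarith [h₂ i hi j hj]
  · intro h
    refine ⟨fun i hi j hj => ?_, fun i hi j hj => ?_, fun i hi j hj => ?_, fun i hi j hj => ?_⟩ <;>
      have := h i j <;> simp only [hi, hj, if_true, if_false] at this <;> linarith

end SignPattern

section Main

variable {n : ℕ} {A B C : Matrix (Fin n) (Fin n) ℝ} {J : Finset (Fin n)}

theorem isUnit_det_and_blockPattern_inv_of_mem_intervalHull
    (hIP : IsAlmostPFirst (Ic A B + diagonal (fun i => if i ∈ J then (1 : ℝ) else -1) * Dlt A B *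
      diagonal (fun i => if i ∈ J then (1 : ℝ) else -1)) J)
    (hV : IsAlmostPFirst (Iz A B fun i => if i ∈ J then (1 : ℝ) else -1) J)
    (hC : C ∈ IntervalHull A B) : IsUnit C.det ∧ BlockPattern C⁻¹ J := by
  have hD := diagonal_mul_diagonal_of_signVec (signVec_ite J)
  obtain ⟨hLu, hLinv⟩ := isUnit_det_and_inv_neg_conj hD hIP.1
  obtain ⟨hUu, hUinv⟩ := isUnit_det_and_inv_neg_conj hD hV.1
  have hLpos := (blockPattern_iff _ J).mp hIP.2.2
  have hUpos := (blockPattern_iff _ J).mp hV.2.2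
  have hbounds := neg_conj_mem_Icc_of_mem_intervalHull (signVec_ite J) hC
  obtain ⟨hXu, hXinv⟩ := isUnit_det_and_inv_le_of_le_of_le (fun i j => (hbounds i j).1)
    (fun i j => (hbounds i j).2) hLu hUu (hLinv ▸ fun i j => (hLpos i j).le)
    (hUinv ▸ fun i j => (hUpos i j).le)
  obtain ⟨hCu, hCinv⟩ := isUnit_det_and_inv_neg_conj hD hXu
  rw [neg_conj_neg_conj hD] at hCu hCinv
  refine ⟨hCu, (blockPattern_iff _ J).mpr fun i j => ?_⟩
  rw [hCinv, neg_conj_neg_conj hD]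
  exact (hUpos i j).trans_le (hUinv ▸ hXinv i j)

theorem principalMinor_ne_zero_of_mem_intervalHull
    (hIz : ∀ z, SignVec z → ∀ s ≠ univ, 0 < principalMinor (Iz A B z) s)
    (hC : C ∈ IntervalHull A B) {s : Finset (Fin n)} (hs : s ≠ univ) :
    principalMinor C s ≠ 0 := by
  intro h0
  obtain ⟨x, hx, hCx⟩ := exists_mulVec_eq_zero_iff.mpr h0
  let z : Fin n → ℝ := fun i => if h : i ∈ s then (if 0 ≤ x ⟨i, h⟩ then 1 else -1) else 1
  have hz : SignVec z := fun i => by unfold z; split_ifs <;> simp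
  have hzx : ∀ a : s, z a * x a = |x a| := fun a => by
    by_cases h : 0 ≤ x a
    · simp [z, a.2, h, abs_of_nonneg h]
    · simp [z, a.2, h, abs_of_neg (not_le.mp h)]
  have hP : ∀ t, 0 < principalMinor ((Iz A B z).submatrix ((↑) : s → Fin n) (↑)) t := by
    intro t
    let f := (Function.Embedding.subtype (· ∈ t)).trans (Function.Embedding.subtype (· ∈ s))
    have hf : univ.map f ≠ univ := fun h => hs <| univ_subset_iff.mp <| h ▸ fun k hk => by
      obtain ⟨a, -, rfl⟩ := mem_map.mp hk
      exact (a : s).2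
    have := hIz z hz _ hf
    rwa [← det_submatrix_embedding] at this
  obtain ⟨i, hi⟩ := exists_pos_mul_mulVec_of_principalMinor_pos hP hx
  have hle : x i * ((Iz A B z).submatrix ((↑) : s → Fin n) (↑) *ᵥ x) i ≤
      x i * (C.submatrix ((↑) : s → Fin n) (↑) *ᵥ x) i := by
    simp only [mulVec, dotProduct, mul_sum, submatrix_apply]
    exact sum_le_sum fun j _ => by linarith [mul_Iz_mul_le hC (hzx i) (hzx j)]
  rw [hCx, Pi.zero_apply, mul_zero] at hle
  linarith

theorem isAlmostPFirst_of_mem_intervalHull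
    (hIP : IsAlmostPFirst (Ic A B + diagonal (fun i => if i ∈ J then (1 : ℝ) else -1) * Dlt A B *
      diagonal (fun i => if i ∈ J then (1 : ℝ) else -1)) J)
    (hIz : ∀ z, SignVec z → IsAlmostPFirst (Iz A B z) J) (hC : C ∈ IntervalHull A B) :
    IsAlmostPFirst C J := by
  have hpattern : ∀ M ∈ IntervalHull A B, IsUnit M.det ∧ BlockPattern M⁻¹ J := fun _ =>
    isUnit_det_and_blockPattern_inv_of_mem_intervalHull hIP (hIz _ (signVec_ite J))
  obtain ⟨hCu, hCpat⟩ := hpattern C hC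
  refine ⟨hCu, fun s hs => ?_, hCpat⟩
  have : Nonempty (Fin n) := ⟨hs.choose⟩
  have hAP : ∀ z, SignVec z → IsAlmostPMatrix (Iz A B z) := fun z hz =>
    (isNMatrix_inv_iff_isAlmostPMatrix (hIz z hz).1).mp (hIz z hz).2.1
  -- the signs at the vertex `Iz` of the sign vector of `J` persist on the connected hull, where
  -- they never vanish
  have hV := hAP _ (signVec_ite J)
  have hVmem := Iz_mem_intervalHull (A := A) (B := B) (signVec_ite J)
  have hS := (convex_intervalHull (A := A) (B := B)).isPreconnected
  have hminor : ∀ t ≠ univ, 0 < principalMinor C t := fun t ht =>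
    pos_of_isPreconnected_of_ne_zero hS (continuous_principalMinor t).continuousOn
      (fun _ hM => principalMinor_ne_zero_of_mem_intervalHull
        (fun z hz _ => (hAP z hz).principalMinor_pos) hM ht)
      hVmem hC (hV.principalMinor_pos ht)
  have hdet : 0 < -C.det :=
    pos_of_isPreconnected_of_ne_zero hS continuous_id.matrix_det.neg.continuousOn
      (fun M hM => neg_ne_zero.mpr (hpattern M hM).1.ne_zero) hVmem hC (neg_pos.mpr hV.2)
  exact (isNMatrix_inv_iff_isAlmostPMatrix hCu).mpr
    ⟨fun t _ ht => hminor t ht, neg_pos.mp hdet⟩ s hs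

end Main

theorem stmt16_general {n : ℕ} (A B : Matrix (Fin n) (Fin n) ℝ) (J : Finset (Fin n)) :
    (∀ C ∈ IntervalHull A B, IsAlmostPFirst C J) ↔
      (IsAlmostPFirst
          (Ic A B + Matrix.diagonal (fun i => if i ∈ J then (1:ℝ) else -1) * Dlt A B *
            Matrix.diagonal (fun i => if i ∈ J then (1:ℝ) else -1)) J ∧
        ∀ z : Fin n → ℝ, SignVec z → IsAlmostPFirst (Iz A B z) J) := by
  constructor
  · intro h
    exact ⟨h _ (Ic_add_mem_intervalHull (signVec_ite J)), fun z hz => h _ (Iz_mem_intervalHull hz)⟩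
  · rintro ⟨hIP, hIz⟩ C hC
    exact isAlmostPFirst_of_mem_intervalHull hIP hIz hC

theorem stmt16 {n : ℕ} (A B : Matrix (Fin n) (Fin n) ℝ) (J : Finset (Fin n))
    (hJ : J.Nonempty) (hJ2 : J ≠ Finset.univ) :
    (∀ C ∈ IntervalHull A B, IsAlmostPFirst C J) ↔
      (IsAlmostPFirst
          (Ic A B + Matrix.diagonal (fun i => if i ∈ J then (1:ℝ) else -1) * Dlt A B *
            Matrix.diagonal (fun i => if i ∈ J then (1:ℝ) else -1)) J ∧
        ∀ z : Fin n → ℝ, SignVec z → IsAlmostPFirst (Iz A B z) J) :=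
  stmt16_general A B J
end

section
/- Let A, B ∈ ℝ^{m×n} and let (I_l)_{ij} = min(a_{ij}, b_{ij}). Then every matrix in the interval hull I(A,B) is semipositive if and only if I_l is semipositive. -/
open Matrix Finset

theorem Semipos.mono {p q : Type*} [Fintype q] {M N : Matrix p q ℝ}
    (hMN : ∀ i j, M i j ≤ N i j) (hM : Semipos M) : Semipos N := by
  obtain ⟨x, hx, hMx⟩ := hM
  refine ⟨x, hx, fun i => (hMx i).trans_le ?_⟩
  exact Finset.sum_le_sum fun j _ => mul_le_mul_of_nonneg_right (hMN i j) (hx j)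

theorem Il_mem_intervalHull {m n : ℕ} (A B : Matrix (Fin m) (Fin n) ℝ) :
    Il A B ∈ IntervalHull A B := by
  intro i j
  rcases le_total (A i j) (B i j) with hAB | hBA
  · exact ⟨1, ⟨zero_le_one, le_rfl⟩, by simp [Il, min_eq_left hAB]⟩
  · exact ⟨0, ⟨le_rfl, zero_le_one⟩, by simp [Il, min_eq_right hBA]⟩

theorem Il_le_of_mem_intervalHull {m n : ℕ} {A B C : Matrix (Fin m) (Fin n) ℝ}
    (hC : C ∈ IntervalHull A B) (i : Fin m) (j : Fin n) : Il A B i j ≤ C i j := by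
  obtain ⟨t, ⟨ht0, ht1⟩, hCt⟩ := hC i j
  rw [hCt]
  exact Convex.min_le_combo (A i j) (B i j) ht0 (sub_nonneg.mpr ht1) (add_sub_cancel t 1)

theorem stmt17 {m n : ℕ} (A B : Matrix (Fin m) (Fin n) ℝ) :
    (∀ C ∈ IntervalHull A B, Semipos C) ↔ Semipos (Il A B) :=
  ⟨fun h => h _ (Il_mem_intervalHull A B),
    fun h _ hC => h.mono (Il_le_of_mem_intervalHull hC)⟩
end

section
/- Let B, C ∈ ℝ^{n×n} with C ≤ B entrywise, B invertible, and B^{-1} ≥ 0 entrywise. Then C is invertible with C^{-1} ≥ 0 if and only if there exists x ≥ 0 with Cx > 0 (entrywise). -/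
open Matrix Finset

/-!
Write `A ≤ B` entrywise. The matrix `B⁻¹ * C` has nonpositive off-diagonal entries, since
`B⁻¹ * C ≤ B⁻¹ * B = 1` entrywise, and it maps the semipositivity witness `x` of `C` to the
positive vector `B⁻¹ (C x)`. A matrix `A` with nonpositive off-diagonal entries and `A x > 0`
for some `x ≥ 0` is monotone in the sense of Collatz (`A v ≥ 0` forces `v ≥ 0`): minimise
`v i / x i` at `i` and put `c = v i / x i`; the vector `v - c x` is nonnegative and vanishes
at `i`, so its image has a nonpositive `i`-th entry, which forces `c ≥ 0`. Since `B⁻¹ ≥ 0`,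
monotonicity passes from `B⁻¹ * C` to `C`, and a monotone matrix is invertible with nonnegative
inverse, its inverse mapping the nonnegative unit vectors to nonnegative vectors.
-/

namespace Matrix

section OrderedSemiring

variable {m ι R : Type*} [Fintype ι] [Semiring R] [PartialOrder R] [IsOrderedRing R]

theorem mulVec_nonneg {M : Matrix m ι R} (hM : ∀ i j, 0 ≤ M i j) {v : ι → R} (hv : 0 ≤ v) :
    0 ≤ M *ᵥ v :=
  fun i => dotProduct_nonneg_of_nonneg (fun j => hM i j) hv

def IsZMatrix (A : Matrix ι ι R) : Prop :=
  ∀ i j, i ≠ j → A i j ≤ 0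

def IsMonotone (A : Matrix ι ι R) : Prop :=
  ∀ v, 0 ≤ A *ᵥ v → 0 ≤ v

theorem IsZMatrix.mulVec_apply_nonpos {A : Matrix ι ι R} (hA : A.IsZMatrix) {u : ι → R}
    (hu : 0 ≤ u) {i : ι} (hui : u i = 0) : (A *ᵥ u) i ≤ 0 := by
  refine Finset.sum_nonpos fun j _ => ?_
  rcases eq_or_ne i j with rfl | hij
  · simp [hui]
  · exact mul_nonpos_of_nonpos_of_nonneg (hA i j hij) (hu j)

theorem IsZMatrix.pos_of_mulVec_pos {A : Matrix ι ι R} (hA : A.IsZMatrix) {x : ι → R}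
    (hx : 0 ≤ x) (hAx : ∀ i, 0 < (A *ᵥ x) i) (i : ι) : 0 < x i :=
  (hx i).lt_of_ne fun h => (hAx i).not_ge (hA.mulVec_apply_nonpos hx h.symm)

theorem isZMatrix_mul_of_le {P B C : Matrix ι ι R} (hP : ∀ i j, 0 ≤ P i j)
    (hle : ∀ i j, C i j ≤ B i j) (hPB : (P * B).IsZMatrix) : (P * C).IsZMatrix :=
  fun i j hij => (Finset.sum_le_sum fun k _ => mul_le_mul_of_nonneg_left (hle k j) (hP i k)).trans
    (hPB i j hij)

theorem IsMonotone.of_nonneg_mul {P A : Matrix ι ι R} (hP : ∀ i j, 0 ≤ P i j)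
    (hPA : (P * A).IsMonotone) : A.IsMonotone :=
  fun v hv => hPA v (by rw [← mulVec_mulVec]; exact mulVec_nonneg hP hv)

end OrderedSemiring

section LinearOrderedField

variable {ι R : Type*} [Fintype ι] [Field R] [LinearOrder R] [IsStrictOrderedRing R]

theorem IsZMatrix.isMonotone {A : Matrix ι ι R} (hA : A.IsZMatrix) {x : ι → R}
    (hx : 0 ≤ x) (hAx : ∀ i, 0 < (A *ᵥ x) i) : A.IsMonotone := by
  intro v hv j
  have hxpos := hA.pos_of_mulVec_pos hx hAx
  obtain ⟨i, -, hmin⟩ := Finset.univ.exists_min_image (fun k => v k / x k) ⟨j, Finset.mem_univ j⟩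
  set c := v i / x i
  have hcx : ∀ k, c * x k ≤ v k := fun k =>
    (le_div_iff₀ (hxpos k)).mp (hmin k (Finset.mem_univ k))
  have hu : 0 ≤ v - c • x := fun k => by simpa using hcx k
  have hui : (v - c • x) i = 0 := by simp [c, div_mul_cancel₀ _ (hxpos i).ne']
  have hAu : (A *ᵥ v) i - c * (A *ᵥ x) i ≤ 0 := by
    simpa [mulVec_sub, mulVec_smul] using hA.mulVec_apply_nonpos hu hui
  have hvi : 0 ≤ (A *ᵥ v) i := hv i
  have hc : 0 ≤ c := nonneg_of_mul_nonneg_left (by linarith) (hAx i)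
  exact (mul_nonneg hc (hxpos j).le).trans (hcx j)

theorem IsMonotone.isUnit_det [DecidableEq ι] {A : Matrix ι ι R} (hA : A.IsMonotone) :
    IsUnit A.det := by
  rw [← isUnit_iff_isUnit_det, ← mulVec_injective_iff_isUnit]
  intro v w h
  have hvw := hA (v - w) (by rw [mulVec_sub, h, sub_self])
  have hwv := hA (w - v) (by rw [mulVec_sub, h, sub_self])
  exact le_antisymm (sub_nonneg.mp hwv) (sub_nonneg.mp hvw)

theorem IsMonotone.inv_nonneg [DecidableEq ι] {A : Matrix ι ι R} (hA : A.IsMonotone)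
    (i j : ι) : 0 ≤ A⁻¹ i j := by
  have hcol := hA (A⁻¹ *ᵥ Pi.single j 1) (by
    rw [mulVec_mulVec, mul_nonsing_inv _ hA.isUnit_det, one_mulVec]
    exact Pi.single_nonneg.mpr zero_le_one)
  simpa [mulVec_single_one] using hcol i

theorem mulVec_pos_of_isUnit_det [DecidableEq ι] {P : Matrix ι ι R} (hP : IsUnit P.det)
    (hP0 : ∀ i j, 0 ≤ P i j) {y : ι → R} (hy : ∀ i, 0 < y i) (i : ι) : 0 < (P *ᵥ y) i := by
  obtain ⟨k, hk⟩ : ∃ k, P i k ≠ 0 := by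
    by_contra! hrow
    exact hP.ne_zero (det_eq_zero_of_row_eq_zero i hrow)
  exact Finset.sum_pos' (fun l _ => mul_nonneg (hP0 i l) (hy l).le)
    ⟨k, Finset.mem_univ k, mul_pos ((hP0 i k).lt_of_ne hk.symm) (hy k)⟩

end LinearOrderedField

end Matrix

theorem stmt19 {n : ℕ} (B C : Matrix (Fin n) (Fin n) ℝ)
    (hle : ∀ i j, C i j ≤ B i j) (hB : IsUnit B.det) (hBinv : ∀ i j, 0 ≤ B⁻¹ i j) :
    (IsUnit C.det ∧ ∀ i j, 0 ≤ C⁻¹ i j) ↔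
      ∃ x : Fin n → ℝ, (∀ j, 0 ≤ x j) ∧ ∀ i, 0 < C.mulVec x i := by
  constructor
  · rintro ⟨hC, hCinv⟩
    refine ⟨C⁻¹ *ᵥ 1, mulVec_nonneg hCinv zero_le_one, fun i => ?_⟩
    simp [mulVec_mulVec, mul_nonsing_inv _ hC]
  · rintro ⟨x, hx, hCx⟩
    have hZ : (B⁻¹ * C).IsZMatrix :=
      isZMatrix_mul_of_le hBinv hle (by
        rw [nonsing_inv_mul _ hB]; exact fun _ _ hij => (one_apply_ne hij).le)
    have hpos : ∀ i, 0 < ((B⁻¹ * C) *ᵥ x) i := by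
      rw [← mulVec_mulVec]
      exact mulVec_pos_of_isUnit_det (isUnit_nonsing_inv_det B hB) hBinv hCx
    have hC : C.IsMonotone := (hZ.isMonotone hx hpos).of_nonneg_mul hBinv
    exact ⟨hC.isUnit_det, hC.inv_nonneg⟩
end
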